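/- Let k ≥ 3 and r ≥ 1 be integers and let λ ∈ ℝ be a root of Q^k_{r+1} = x·R^k_{r+1} − k·R^k_r. Define v on the vertices of \widehat{X_r^k} by v_γ = R^k_{r+1−m}(λ) whenever γ is at distance m from the root (0 ≤ m ≤ r). Then v is nonzero and A(\widehat{X_r^k})v = λv; that is, v is an eigenvector of \widehat{X_r^k} with eigenvalue λ. -/

import Mathlib

open Polynomial

/-- Vertices of the rooted tree of depth `r` in which each vertex at depth `i < r`
has `b i` children: a vertex is a word assigning to each position `i < m ≤ r`
a letter in `Fin (b i)`; the empty word (`m = 0`) is the root, and the depth of a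
vertex is its length `m`. -/
abbrev BVertex (b : ℕ → ℕ) (r : ℕ) := Σ m : Fin (r + 1), (i : Fin (m : ℕ)) → Fin (b i)

/-- `y` is a child of `x`: the word `y` extends the word `x` by one letter. -/
def BExt {b : ℕ → ℕ} {r : ℕ} (x y : BVertex b r) : Prop :=
  ∃ h : (y.1 : ℕ) = (x.1 : ℕ) + 1,
    ∀ i : Fin (x.1 : ℕ), y.2 ⟨(i : ℕ), by have := i.isLt; omega⟩ = x.2 i

/-- Adjacency in the rooted tree: the parent/child relation. -/
def BAdj {b : ℕ → ℕ} {r : ℕ} (x y : BVertex b r) : Prop := BExt x y ∨ BExt y x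

open Classical in
/-- Adjacency matrix of the rooted tree with branching sequence `b` and depth `r`. -/
noncomputable def BAdjMatrix (b : ℕ → ℕ) (r : ℕ) : Matrix (BVertex b r) (BVertex b r) ℝ :=
  fun x y => if BAdj x y then 1 else 0

/-- `lam` is an eigenvalue of the adjacency matrix of the tree. -/
def IsAdjEigenvalue (b : ℕ → ℕ) (r : ℕ) (lam : ℝ) : Prop :=
  ∃ v : BVertex b r → ℝ, v ≠ 0 ∧ (BAdjMatrix b r).mulVec v = lam • v

/-- Dimension of the `lam`-eigenspace of the adjacency matrix of the tree. -/
noncomputable def adjEigDim (b : ℕ → ℕ) (r : ℕ) (lam : ℝ) : ℕ :=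
  Module.finrank ℝ
    (LinearMap.ker ((BAdjMatrix b r).mulVecLin - lam • LinearMap.id))

/-- Branching sequence of the tree `\widehat{X_r^k}`: the root has `k` children and
every other non-leaf vertex has `k − 1` children. -/
def hatB (k : ℕ) : ℕ → ℕ := fun i => if i = 0 then k else k - 1

/-- The polynomials `R^k_n`: `R^k_0 = 0`, `R^k_1 = 1`,
`R^k_n = x·R^k_{n-1} − (k−1)·R^k_{n-2}`. -/
noncomputable def Rpoly (k : ℕ) : ℕ → Polynomial ℝ
  | 0 => 0
  | 1 => 1
  | n + 2 => X * Rpoly k (n + 1) - C ((k : ℝ) - 1) * Rpoly k n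

/-- The polynomials `Q^k_n = x·R^k_n − k·R^k_{n-1}`. -/
noncomputable def Qpoly (k : ℕ) (n : ℕ) : Polynomial ℝ :=
  X * Rpoly k n - C (k : ℝ) * Rpoly k (n - 1)

section TreeAux

variable {b : ℕ → ℕ} {r : ℕ}

lemma BVertex.ext' : ∀ {x y : BVertex b r}, ((x.1 : ℕ) = (y.1 : ℕ)) →
    (∀ (i : ℕ) (hx : i < (x.1 : ℕ)) (hy : i < (y.1 : ℕ)),
      HEq (x.2 ⟨i, hx⟩) (y.2 ⟨i, hy⟩)) → x = y := by
  rintro ⟨⟨m, hm⟩, f⟩ ⟨⟨m', hm'⟩, g⟩ h1 h2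
  dsimp at h1 h2
  subst h1
  have hfg : f = g := by
    funext i
    exact eq_of_heq (h2 i i.isLt i.isLt)
  subst hfg
  rfl

def bchild (x : BVertex b r) (h : (x.1 : ℕ) < r) (j : Fin (b (x.1 : ℕ))) : BVertex b r :=
  ⟨⟨(x.1 : ℕ) + 1, by omega⟩, fun i =>
    if hi : (i : ℕ) < (x.1 : ℕ) then x.2 ⟨i, hi⟩
    else Fin.cast (congrArg b (by
      have h1 : (i : ℕ) < (x.1 : ℕ) + 1 := i.isLt
      omega)) j⟩

lemma bext_bchild (x : BVertex b r) (h : (x.1 : ℕ) < r) (j : Fin (b (x.1 : ℕ))) :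
    BExt x (bchild x h j) := by
  refine ⟨rfl, fun i => ?_⟩
  simp only [bchild]
  rw [dif_pos i.isLt]

lemma bchild_injective (x : BVertex b r) (h : (x.1 : ℕ) < r) :
    Function.Injective (bchild x h) := by
  intro j j' hjj
  simp only [bchild] at hjj
  injection hjj with h1 h2
  have h3 := congrFun h2 ⟨(x.1 : ℕ), Nat.lt_succ_self _⟩
  rw [dif_neg (lt_irrefl _), dif_neg (lt_irrefl _)] at h3
  exact Fin.ext (congrArg Fin.val h3)

lemma bext_iff_child (x : BVertex b r) (h : (x.1 : ℕ) < r) (y : BVertex b r) :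
    BExt x y ↔ ∃ j, bchild x h j = y := by
  constructor
  · rintro ⟨hd, hl⟩
    refine ⟨y.2 ⟨(x.1 : ℕ), by omega⟩, ?_⟩
    refine BVertex.ext' (by show (x.1 : ℕ) + 1 = _; omega) ?_
    intro i hx hy
    by_cases hi : i < (x.1 : ℕ)
    · simp only [bchild]
      rw [dif_pos hi]
      exact heq_of_eq (hl ⟨i, hi⟩).symm
    · have hix : i = (x.1 : ℕ) := by
        have : i < (x.1 : ℕ) + 1 := hx
        omega
      subst hix
      simp only [bchild]
      rw [dif_neg (lt_irrefl _)]
      exact HEq.rfl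
  · rintro ⟨j, rfl⟩
    exact bext_bchild x h j

def bparent (x : BVertex b r) (m : ℕ) (h : (x.1 : ℕ) = m + 1) : BVertex b r :=
  ⟨⟨m, by have := x.1.isLt; omega⟩, fun i => x.2 ⟨i, by
    have hi : (i : ℕ) < m := i.isLt
    omega⟩⟩

lemma bext_parent_iff (x : BVertex b r) (m : ℕ) (h : (x.1 : ℕ) = m + 1)
    (y : BVertex b r) : BExt y x ↔ y = bparent x m h := by
  constructor
  · rintro ⟨hd, hl⟩
    refine BVertex.ext' (by show (y.1 : ℕ) = m; omega) ?_
    intro i hx hy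
    exact heq_of_eq (hl ⟨i, hx⟩).symm
  · rintro rfl
    exact ⟨h, fun i => rfl⟩

lemma no_parent (x : BVertex b r) (h : (x.1 : ℕ) = 0) (y : BVertex b r) :
    ¬ BExt y x := by
  rintro ⟨hd, -⟩; omega

lemma no_child (x : BVertex b r) (h : (x.1 : ℕ) = r) (y : BVertex b r) :
    ¬ BExt x y := by
  rintro ⟨hd, -⟩
  have := y.1.isLt
  omega

open Classical in
lemma sum_bext (x : BVertex b r) (h : (x.1 : ℕ) < r) (f : BVertex b r → ℝ) :
    ∑ y, (if BExt x y then f y else 0) = ∑ j : Fin (b (x.1 : ℕ)), f (bchild x h j) := by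
  rw [← Finset.sum_filter]
  rw [show Finset.univ.filter (fun y => BExt x y) = Finset.univ.image (bchild x h) by
    ext y
    simp [bext_iff_child x h y]]
  exact Finset.sum_image (fun j _ j' _ hh => bchild_injective x h hh)

open Classical in
lemma sum_bext_rev (x : BVertex b r) (m : ℕ) (h : (x.1 : ℕ) = m + 1)
    (f : BVertex b r → ℝ) :
    ∑ y, (if BExt y x then f y else 0) = f (bparent x m h) := by
  rw [← Finset.sum_filter]
  rw [show Finset.univ.filter (fun y => BExt y x) = {bparent x m h} by
    ext y
    simp [bext_parent_iff x m h y]]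
  exact Finset.sum_singleton _ _

open Classical in
lemma sum_bext_root (x : BVertex b r) (h : (x.1 : ℕ) = 0) (f : BVertex b r → ℝ) :
    ∑ y, (if BExt y x then f y else 0) = 0 :=
  Finset.sum_eq_zero fun y _ => if_neg (no_parent x h y)

open Classical in
lemma sum_bext_leaf (x : BVertex b r) (h : (x.1 : ℕ) = r) (f : BVertex b r → ℝ) :
    ∑ y, (if BExt x y then f y else 0) = 0 :=
  Finset.sum_eq_zero fun y _ => if_neg (no_child x h y)

lemma bext_asymm {x y : BVertex b r} (h1 : BExt x y) (h2 : BExt y x) : False := by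
  obtain ⟨hd1, -⟩ := h1
  obtain ⟨hd2, -⟩ := h2
  omega

end TreeAux

/-- Let `k ≥ 3`, `r ≥ 1`, and let `lam` be a root of
`Q^k_{r+1} = x·R^k_{r+1} − k·R^k_r`. The vector `v` with `v γ = R^k_{r+1−m}(lam)`
for `γ` at depth `m` is a (nonzero) eigenvector of the adjacency matrix of
`\widehat{X_r^k}` with eigenvalue `lam`. -/
theorem hat_isotropic_eigenvector (k r : ℕ) (hk : 3 ≤ k) (hr : 1 ≤ r) (lam : ℝ)
    (hroot : (Qpoly k (r + 1)).IsRoot lam) :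
    (fun γ : BVertex (hatB k) r => (Rpoly k (r + 1 - (γ.1 : ℕ))).eval lam) ≠ 0 ∧
    (BAdjMatrix (hatB k) r).mulVec
        (fun γ => (Rpoly k (r + 1 - (γ.1 : ℕ))).eval lam) =
      lam • fun γ : BVertex (hatB k) r => (Rpoly k (r + 1 - (γ.1 : ℕ))).eval lam := by
  classical
  set v : BVertex (hatB k) r → ℝ :=
    fun γ => (Rpoly k (r + 1 - (γ.1 : ℕ))).eval lam with hv
  have hQ : lam * (Rpoly k (r + 1)).eval lam - (k : ℝ) * (Rpoly k r).eval lam = 0 := by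
    have := hroot
    simp only [Qpoly, IsRoot, eval_sub, eval_mul, eval_X, eval_C,
      Nat.add_sub_cancel] at this
    linarith
  constructor
  · intro h0
    have hb : ∀ i : ℕ, 0 < hatB k i := by
      intro i; unfold hatB; split <;> omega
    have hl := congrFun h0 ⟨⟨r, Nat.lt_succ_self r⟩, fun i => ⟨0, hb _⟩⟩
    have e1 : r + 1 - r = 1 := by omega
    simp only [hv, e1] at hl
    rw [show Rpoly k 1 = 1 from rfl] at hl
    simp at hl
  · funext x
    have hmul : (BAdjMatrix (hatB k) r).mulVec v x =
        ∑ y, ((if BExt x y then v y else 0) + (if BExt y x then v y else 0)) := by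
      simp only [Matrix.mulVec, dotProduct, BAdjMatrix]
      refine Finset.sum_congr rfl fun y _ => ?_
      by_cases h1 : BExt x y
      · rw [if_pos (show BAdj x y from Or.inl h1), if_pos h1,
          if_neg (fun h2 => bext_asymm h1 h2)]
        ring
      · by_cases h2 : BExt y x
        · rw [if_pos (show BAdj x y from Or.inr h2), if_neg h1, if_pos h2]
          ring
        · rw [if_neg (show ¬BAdj x y by rintro (h | h) <;> [exact h1 h; exact h2 h]),
            if_neg h1, if_neg h2]
          ring
    rw [hmul, Finset.sum_add_distrib]
    have hxlt : (x.1 : ℕ) < r + 1 := x.1.isLt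
    show _ = lam * v x
    rcases Nat.eq_zero_or_pos (x.1 : ℕ) with hm0 | hmpos
    · -- root
      have hlt : (x.1 : ℕ) < r := by omega
      rw [sum_bext x hlt v, sum_bext_root x hm0 v]
      have hval : ∀ j, v (bchild x hlt j) = (Rpoly k r).eval lam := by
        intro j
        have : r + 1 - ((bchild x hlt j).1 : ℕ) = r := by
          show r + 1 - ((x.1 : ℕ) + 1) = r
          omega
        simp only [hv, this]
      simp only [hval, Finset.sum_const, Finset.card_univ, Fintype.card_fin,
        nsmul_eq_mul]
      have hb0 : hatB k (x.1 : ℕ) = k := by rw [hm0]; rfl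
      rw [hb0]
      have hvx : v x = (Rpoly k (r + 1)).eval lam := by
        simp only [hv, hm0, Nat.sub_zero]
      rw [hvx]
      linarith
    · rcases eq_or_lt_of_le (Nat.lt_succ_iff.mp hxlt) with hmr | hlt
      · -- leaf
        have hpar : (x.1 : ℕ) = (r - 1) + 1 := by omega
        rw [sum_bext_leaf x hmr v, sum_bext_rev x (r - 1) hpar v]
        have hval : v (bparent x (r - 1) hpar) = (Rpoly k 2).eval lam := by
          have : r + 1 - ((bparent x (r - 1) hpar).1 : ℕ) = 2 := by
            show r + 1 - (r - 1) = 2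
            omega
          simp only [hv, this]
        have hvx : v x = 1 := by
          have e1 : r + 1 - (x.1 : ℕ) = 1 := by omega
          simp only [hv, e1]
          rw [show Rpoly k 1 = 1 from rfl]
          simp
        rw [hval, hvx]
        have : Rpoly k 2 = X * Rpoly k 1 - C ((k : ℝ) - 1) * Rpoly k 0 := rfl
        rw [this, show Rpoly k 1 = 1 from rfl, show Rpoly k 0 = 0 from rfl]
        simp
      · -- middle
        have hpar : (x.1 : ℕ) = ((x.1 : ℕ) - 1) + 1 := by omega
        rw [sum_bext x hlt v, sum_bext_rev x ((x.1 : ℕ) - 1) hpar v]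
        set m := (x.1 : ℕ) with hm
        set n := r - m with hn
        have hn1 : 1 ≤ n := by omega
        have hcval : ∀ j, v (bchild x hlt j) = (Rpoly k n).eval lam := by
          intro j
          have : r + 1 - ((bchild x hlt j).1 : ℕ) = n := by
            show r + 1 - (m + 1) = n
            omega
          simp only [hv, this]
        have hpval : v (bparent x (m - 1) hpar) = (Rpoly k (n + 2)).eval lam := by
          have : r + 1 - ((bparent x (m - 1) hpar).1 : ℕ) = n + 2 := by
            show r + 1 - (m - 1) = n + 2
            omega
          simp only [hv, this]
        have hvx : v x = (Rpoly k (n + 1)).eval lam := by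
          have : r + 1 - m = n + 1 := by omega
          simp only [hv, ← hm, this]
        simp only [hcval, hpval, hvx, Finset.sum_const, Finset.card_univ,
          Fintype.card_fin, nsmul_eq_mul]
        have hbm : hatB k m = k - 1 := by
          unfold hatB
          rw [if_neg (by omega)]
        rw [hbm]
        have hcast : ((k - 1 : ℕ) : ℝ) = (k : ℝ) - 1 := by
          push_cast [Nat.cast_sub (by omega : 1 ≤ k)]
          ring
        have hrec : (Rpoly k (n + 2)).eval lam =
            lam * (Rpoly k (n + 1)).eval lam - ((k : ℝ) - 1) * (Rpoly k n).eval lam := by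
          obtain ⟨n', hn'⟩ : ∃ n', n = n' + 1 := ⟨n - 1, by omega⟩
          rw [hn']
          rw [show Rpoly k (n' + 1 + 2) = X * Rpoly k (n' + 2) - C ((k : ℝ) - 1) *
            Rpoly k (n' + 1) from rfl]
          simp
        rw [hcast, show v (bparent x ((x.1 : ℕ) - 1) _) = (Rpoly k (n + 2)).eval lam from hpval, hrec]
        ring
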